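/- arXiv:2102.06426 — 7 statements merged into one kernel-verified Lean document; each statement's English description precedes it below -/
import Mathlib

section
/- Let I be a squarefree stable ideal of S = K[x_1,…,x_n] and let k, ℓ be positive integers. Then β_{k,k+ℓ}(I) is an extremal Betti number of I if and only if G(I)_ℓ ≠ ∅ with k + ℓ = max{m(u) : u ∈ G(I)_ℓ}, and m(u) < k + j for all j > ℓ and all u ∈ G(I)_j. -/
open Finset

noncomputable section

/-- `m(u)`: the maximal index in the support of a squarefree monomial `u`,
where a squarefree monomial of `K[x_1,…,x_n]` is identified with its support,
a finite set of variable indices (`m(1) = 0`). -/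
def mmax (u : Finset ℕ) : ℕ := u.sup id

/-- A squarefree monomial ideal of `K[x_1,…,x_n]`, identified with the (finite) set of
squarefree monomials belonging to it: it is upward closed under divisibility of
squarefree monomials, i.e. under taking supersets inside `{1,…,n}`. -/
def IsSqIdeal (n : ℕ) (I : Finset (Finset ℕ)) : Prop :=
  (∀ u ∈ I, u ⊆ Finset.Icc 1 n) ∧
    ∀ u ∈ I, ∀ v, u ⊆ v → v ⊆ Finset.Icc 1 n → v ∈ I

/-- `G(I)`: the minimal monomial generators of a squarefree monomial ideal. -/
def gens (I : Finset (Finset ℕ)) : Finset (Finset ℕ) :=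
  I.filter fun u => ∀ v ∈ I, v ⊆ u → v = u

/-- `G(I)_ℓ`: the degree-`ℓ` minimal generators. -/
def gensDeg (I : Finset (Finset ℕ)) (l : ℕ) : Finset (Finset ℕ) :=
  (gens I).filter fun u => u.card = l

/-- The graded Betti number `β_{k,k+ℓ}(I)` of a squarefree stable ideal, given by the
Aramova–Herzog–Hibi formula (taken as the definition). -/
def betti (I : Finset (Finset ℕ)) (k l : ℕ) : ℕ :=
  ∑ u ∈ gensDeg I l, (mmax u - l).choose k

/-- `β_{k,k+ℓ}(I)` is an extremal Betti number. -/
def IsExtremal (I : Finset (Finset ℕ)) (k l : ℕ) : Prop :=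
  betti I k l ≠ 0 ∧ ∀ i j, k ≤ i → l ≤ j → (i, j) ≠ (k, l) → betti I i j = 0

/-- `C(I)`: the set of corners of `I`. -/
def corners (I : Finset (Finset ℕ)) : Set (ℕ × ℕ) :=
  {p | IsExtremal I p.1 p.2}

/-- squarefree stable ideal. -/
def IsSqStable (n : ℕ) (I : Finset (Finset ℕ)) : Prop :=
  IsSqIdeal n I ∧
    ∀ u ∈ gens I, ∀ j, 1 ≤ j → j < mmax u → j ∉ u →
      insert j (u.erase (mmax u)) ∈ I

/-- squarefree strongly stable ideal. -/
def IsSqStronglyStable (n : ℕ) (I : Finset (Finset ℕ)) : Prop :=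
  IsSqIdeal n I ∧
    ∀ u ∈ gens I, ∀ i ∈ u, ∀ j, 1 ≤ j → j < i → j ∉ u →
      insert j (u.erase i) ∈ I

/-- `u >_slex v` for squarefree monomials of the same degree: at the first position where
the increasing index sequences differ, `u` has the smaller index; equivalently the least
element of the symmetric difference belongs to `u`. -/
def slexGT (u v : Finset ℕ) : Prop :=
  u ≠ v ∧ sInf {a : ℕ | a ∈ symmDiff u v} ∈ u

/-- `u ≥_slex v`. -/
def slexGE (u v : Finset ℕ) : Prop := u = v ∨ slexGT u v

/-- `A^s(k,ℓ)`: the squarefree monomials of `K[x_1,…,x_n]` of degree `ℓ` with `m(u) = k+ℓ`. -/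
def Asf (n k l : ℕ) : Finset (Finset ℕ) :=
  (Finset.Icc 1 n).powerset.filter fun u => u.card = l ∧ mmax u = k + l

/-- The set of gaps of a squarefree monomial `u`, recorded by the element of `u`
immediately preceding each gap. -/
def gapSet (u : Finset ℕ) : Finset ℕ :=
  u.filter fun a => a < mmax u ∧ a + 1 ∉ u

/-- The width of the gap of `u` starting right after `a`. -/
def gapWidth (u : Finset ℕ) (a : ℕ) : ℕ :=
  sInf {b : ℕ | b ∈ u ∧ a < b} - a - 1

/-- The squarefree shadow of a set `T` of squarefree monomials:
`Shad(T) = {x_i u : u ∈ T, i ∉ supp u, i = 1,…,n}`. -/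
def shadS (n : ℕ) (T : Set (Finset ℕ)) : Set (Finset ℕ) :=
  {v | ∃ u ∈ T, ∃ i, i ∈ Finset.Icc 1 n ∧ i ∉ u ∧ v = insert i u}

/-- A squarefree strongly stable set of squarefree monomials. -/
def IsSSSetS (T : Set (Finset ℕ)) : Prop :=
  ∀ u ∈ T, ∀ i ∈ u, ∀ j, 1 ≤ j → j < i → j ∉ u → insert j (u.erase i) ∈ T

/-- Membership in `B(u_1,…,u_r)`, the smallest squarefree strongly stable set
containing the monomials of `U`. -/
inductive BMem (U : Finset (Finset ℕ)) : Finset ℕ → Prop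
  | base : ∀ u ∈ U, BMem U u
  | step : ∀ u, BMem U u → ∀ i ∈ u, ∀ j, 1 ≤ j → j < i → j ∉ u →
      BMem U (insert j (u.erase i))

/-- `BShad(u_1,…,u_r)_{(k₂,ℓ₂)}` for monomials `u_1,…,u_r` of degree `ℓ₁`:
the elements of `Shad^{ℓ₂-ℓ₁}(B(u_1,…,u_r))` with `m(v) ≤ k₂+ℓ₂`. -/
def bshad (n l1 k2 l2 : ℕ) (U : Finset (Finset ℕ)) : Set (Finset ℕ) :=
  {v | v ∈ (shadS n)^[l2 - l1] {u | BMem U u} ∧ mmax v ≤ k2 + l2}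

/-- squarefree lexsegment ideal. -/
def IsSqLex (n : ℕ) (I : Finset (Finset ℕ)) : Prop :=
  IsSqIdeal n I ∧
    ∀ u ∈ I, ∀ v, v ⊆ Finset.Icc 1 n → v.card = u.card → slexGT v u → v ∈ I

/-!
By the Aramova–Herzog–Hibi formula, `β_{i,i+j}(I) = 0` exactly when `m(u) < i + j` for every
`u ∈ G(I)_j`. This vanishing persists as `i` grows, so `(k, ℓ)` is a corner precisely when
`β_{k,k+ℓ} ≠ 0`, `β_{k+1,k+1+ℓ} = 0` and `β_{k,k+j} = 0` for all `j > ℓ`; the first two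
conditions say that `k + ℓ` is the largest `m(u)` over `G(I)_ℓ`.
-/

theorem Finset.exists_le_and_forall_le_iff_sup_eq {α β : Type*} [LinearOrder β] [OrderBot β]
    (s : Finset α) (f : α → β) (c : β) :
    ((∃ x ∈ s, c ≤ f x) ∧ ∀ x ∈ s, f x ≤ c) ↔ s.Nonempty ∧ s.sup f = c := by
  constructor
  · rintro ⟨⟨x, hx, hcx⟩, hle⟩
    exact ⟨⟨x, hx⟩, le_antisymm (Finset.sup_le hle) (hcx.trans (le_sup hx))⟩
  · rintro ⟨hs, rfl⟩
    obtain ⟨x, hx, hsup⟩ := exists_mem_eq_sup s hs f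
    exact ⟨⟨x, hx, hsup.le⟩, fun y hy => le_sup hy⟩

theorem betti_eq_zero_iff_forall_sub_lt (I : Finset (Finset ℕ)) (k l : ℕ) :
    betti I k l = 0 ↔ ∀ u ∈ gensDeg I l, mmax u - l < k := by
  simp only [betti, sum_eq_zero_iff, Nat.choose_eq_zero_iff]

theorem betti_eq_zero_of_le {I : Finset (Finset ℕ)} {k i l : ℕ} (h : betti I k l = 0)
    (hki : k ≤ i) : betti I i l = 0 := by
  rw [betti_eq_zero_iff_forall_sub_lt] at h ⊢
  exact fun u hu => (h u hu).trans_le hki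

/-- Because of truncated subtraction this fails for `k = 0`: `C(m(u) - ℓ, 0) = 1` even if
`m(u) < ℓ`. -/
theorem betti_eq_zero_iff (I : Finset (Finset ℕ)) {k : ℕ} (hk : 0 < k) (l : ℕ) :
    betti I k l = 0 ↔ ∀ u ∈ gensDeg I l, mmax u < k + l := by
  rw [betti_eq_zero_iff_forall_sub_lt]
  refine forall₂_congr fun u _ => ?_
  omega

theorem isExtremal_iff (I : Finset (Finset ℕ)) (k l : ℕ) :
    IsExtremal I k l ↔
      betti I k l ≠ 0 ∧ betti I (k + 1) l = 0 ∧ ∀ j, l < j → betti I k j = 0 := by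
  refine ⟨fun ⟨hne, hvan⟩ => ⟨hne, hvan _ _ (by omega) le_rfl (by simp),
    fun j hj => hvan _ _ le_rfl hj.le (by simp [hj.ne'])⟩, ?_⟩
  rintro ⟨hne, hnext, hhigher⟩
  refine ⟨hne, fun i j hki hlj hij => ?_⟩
  obtain rfl | hlj := hlj.eq_or_lt
  · exact betti_eq_zero_of_le hnext (hki.lt_of_ne fun hik => hij (by rw [hik]))
  · exact betti_eq_zero_of_le (hhigher j hlj) hki

theorem extremal_iff_of_sqStable_general (k l : ℕ) (hk : 1 ≤ k)
    (I : Finset (Finset ℕ)) :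
    IsExtremal I k l ↔
      (gensDeg I l).Nonempty ∧ (gensDeg I l).sup mmax = k + l ∧
        ∀ j, l < j → ∀ u ∈ gensDeg I j, mmax u < k + j := by
  have hcorner : (betti I k l ≠ 0 ∧ betti I (k + 1) l = 0) ↔
      (gensDeg I l).Nonempty ∧ (gensDeg I l).sup mmax = k + l := by
    rw [← exists_le_and_forall_le_iff_sup_eq, ne_eq, betti_eq_zero_iff I hk,
      betti_eq_zero_iff I k.succ_pos]
    push Not
    exact and_congr Iff.rfl (forall₂_congr fun u _ => by omega)
  rw [isExtremal_iff, ← and_assoc, hcorner, and_assoc]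
  exact and_congr Iff.rfl (and_congr Iff.rfl
    (forall₂_congr fun j _ => betti_eq_zero_iff I hk j))

/-- Characterization of extremal Betti numbers of squarefree stable ideals:
for a squarefree stable ideal `I` of `K[x_1,…,x_n]` and positive integers `k, ℓ`,
`β_{k,k+ℓ}(I)` is extremal iff `G(I)_ℓ ≠ ∅` with `k+ℓ = max{m(u) : u ∈ G(I)_ℓ}` and
`m(u) < k + j` for all `j > ℓ` and all `u ∈ G(I)_j`. -/
theorem extremal_iff_of_sqStable (n k l : ℕ) (hk : 1 ≤ k) (hl : 1 ≤ l)
    (I : Finset (Finset ℕ)) (hI : IsSqStable n I) :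
    IsExtremal I k l ↔
      (gensDeg I l).Nonempty ∧ (gensDeg I l).sup mmax = k + l ∧
        ∀ j, l < j → ∀ u ∈ gensDeg I j, mmax u < k + j :=
  extremal_iff_of_sqStable_general k l hk I
end
end

section
/- Let I be a squarefree stable ideal of S = K[x_1,…,x_n]. If β_{k,k+ℓ}(I) is an extremal Betti number of I, then β_{k,k+ℓ}(I) = |{u ∈ G(I)_ℓ : m(u) = k+ℓ}|. -/
open Finset

noncomputable section

theorem card_le_mmax {u : Finset ℕ} (hu : ∀ a ∈ u, 1 ≤ a) : u.card ≤ mmax u := by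
  have hsub : u ⊆ Finset.Icc 1 (mmax u) := fun a ha =>
    Finset.mem_Icc.mpr ⟨hu a ha, Finset.le_sup (f := id) ha⟩
  simpa using Finset.card_le_card hsub

theorem IsSqIdeal.card_le_mmax {n : ℕ} {I : Finset (Finset ℕ)} (hI : IsSqIdeal n I)
    {u : Finset ℕ} (hu : u ∈ I) : u.card ≤ mmax u :=
  _root_.card_le_mmax fun _ ha => (Finset.mem_Icc.mp (hI.1 u hu ha)).1

theorem mem_of_mem_gensDeg {I : Finset (Finset ℕ)} {l : ℕ} {u : Finset ℕ}
    (hu : u ∈ gensDeg I l) : u ∈ I :=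
  (Finset.mem_filter.mp (Finset.mem_filter.mp hu).1).1

theorem card_of_mem_gensDeg {I : Finset (Finset ℕ)} {l : ℕ} {u : Finset ℕ}
    (hu : u ∈ gensDeg I l) : u.card = l :=
  (Finset.mem_filter.mp hu).2

theorem mmax_sub_le_of_betti_succ_eq_zero {I : Finset (Finset ℕ)} {k l : ℕ}
    (h : betti I (k + 1) l = 0) {u : Finset ℕ} (hu : u ∈ gensDeg I l) : mmax u - l ≤ k :=
  Nat.lt_succ_iff.mp <| Nat.choose_eq_zero_iff.mp <| Finset.sum_eq_zero_iff.mp h u hu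

theorem choose_sub_eq_ite {m l k : ℕ} (hlm : l ≤ m) (hmk : m - l ≤ k) :
    (m - l).choose k = if m = k + l then 1 else 0 := by
  split_ifs with hm
  · rw [show m - l = k by omega, Nat.choose_self]
  · exact Nat.choose_eq_zero_of_lt (by omega)

/-- Each summand `C(m(u) - ℓ, k)` of `β_{k,k+ℓ}` is `0` or `1` once `β_{k+1,k+1+ℓ}` vanishes. -/
theorem betti_eq_card_of_betti_succ_eq_zero {n : ℕ} {I : Finset (Finset ℕ)} {k l : ℕ}
    (hI : IsSqIdeal n I) (h : betti I (k + 1) l = 0) :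
    betti I k l = ((gensDeg I l).filter fun u => mmax u = k + l).card := by
  rw [betti, Finset.card_filter]
  refine Finset.sum_congr rfl fun u hu => choose_sub_eq_ite ?_ ?_
  · exact card_of_mem_gensDeg hu ▸ hI.card_le_mmax (mem_of_mem_gensDeg hu)
  · exact mmax_sub_le_of_betti_succ_eq_zero h hu

/-- if `β_{k,k+ℓ}(I)` is an extremal Betti number of a squarefree stable
ideal `I`, then `β_{k,k+ℓ}(I) = |{u ∈ G(I)_ℓ : m(u) = k+ℓ}|`. -/
theorem betti_eq_card_of_extremal (n k l : ℕ) (I : Finset (Finset ℕ))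
    (hI : IsSqStable n I) (h : IsExtremal I k l) :
    betti I k l = ((gensDeg I l).filter fun u => mmax u = k + l).card :=
  betti_eq_card_of_betti_succ_eq_zero hI.1 (h.2 (k + 1) l k.le_succ le_rfl (by simp))
end
end

section
/- Every nonzero proper squarefree strongly stable ideal I of S = K[x_1,x_2,x_3] has at most one corner, i.e. |C(I)| ≤ 1. -/
open Finset

noncomputable section

/-!
Corners of any squarefree monomial ideal form an antichain, so two distinct corners
`(k₁, ℓ₁)`, `(k₂, ℓ₂)` with `ℓ₁ ≤ ℓ₂` satisfy `ℓ₁ < ℓ₂` and `k₁ > k₂ ≥ 0`. By the Betti number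
formula this gives minimal generators `u`, `v` with `deg u < deg v` and `m(u) > deg u`. In three
variables this is impossible: if `deg v = 3` then `v = x₁x₂x₃` is divisible by `u`, and if
`deg v = 2` then `u = x_a` with `a ≥ 2`, so `x₁ ∈ I` by strong stability and `v`, being divisible
by neither `x₁` nor `x_a`, would have degree at most one.
-/

lemma mmax_empty : mmax ∅ = 0 := rfl

lemma mmax_singleton (a : ℕ) : mmax {a} = a := sup_singleton

lemma mem_of_mem_gens {I : Finset (Finset ℕ)} {u : Finset ℕ} (hu : u ∈ gens I) : u ∈ I :=
  (mem_filter.mp hu).1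

lemma not_subset_of_mem_gens {I : Finset (Finset ℕ)} {v w : Finset ℕ} (hv : v ∈ gens I)
    (hw : w ∈ I) (hcard : w.card < v.card) : ¬ w ⊆ v := fun hwv =>
  hcard.ne (congrArg card ((mem_filter.mp hv).2 w hw hwv))

lemma exists_mem_gensDeg_of_betti_ne_zero {I : Finset (Finset ℕ)} {k l : ℕ}
    (h : betti I k l ≠ 0) : ∃ u ∈ gensDeg I l, k ≤ mmax u - l := by
  obtain ⟨u, hu, hne⟩ := exists_ne_zero_of_sum_ne_zero h
  exact ⟨u, hu, not_lt.mp (mt Nat.choose_eq_zero_of_lt hne)⟩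

lemma IsExtremal.eq_of_le {I : Finset (Finset ℕ)} {k₁ l₁ k₂ l₂ : ℕ}
    (h₁ : IsExtremal I k₁ l₁) (h₂ : IsExtremal I k₂ l₂) (hk : k₁ ≤ k₂) (hl : l₁ ≤ l₂) :
    (k₁, l₁) = (k₂, l₂) := by
  by_contra hne
  exact h₂.1 (h₁.2 k₂ l₂ hk hl (Ne.symm hne))

lemma corners_subsingleton_of_mmax_le_card {I : Finset (Finset ℕ)}
    (h : ∀ u ∈ gens I, ∀ v ∈ gens I, u.card < v.card → mmax u ≤ u.card) :
    (corners I).Subsingleton := by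
  intro p hp q hq
  wlog hl : p.2 ≤ q.2 generalizing p q
  · exact (this hq hp (le_of_not_ge hl)).symm
  rcases le_or_gt p.1 q.1 with hk | hk
  · exact hp.eq_of_le hq hk hl
  have hl' : p.2 < q.2 := by
    refine lt_of_le_of_ne hl fun heq => hk.ne ?_
    exact congrArg Prod.fst (hq.eq_of_le hp hk.le heq.ge)
  obtain ⟨u, hu, hku⟩ := exists_mem_gensDeg_of_betti_ne_zero hp.1
  obtain ⟨v, hv, -⟩ := exists_mem_gensDeg_of_betti_ne_zero hq.1
  rw [gensDeg, mem_filter] at hu hv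
  have hmu := h u hu.1 v hv.1 (by omega)
  omega

lemma mmax_le_card_of_three_vars {I : Finset (Finset ℕ)} (hI : IsSqStronglyStable 3 I)
    {u v : Finset ℕ} (hu : u ∈ gens I) (hv : v ∈ gens I) (huv : u.card < v.card) :
    mmax u ≤ u.card := by
  have hu3 : u ⊆ Icc 1 3 := hI.1.1 u (mem_of_mem_gens hu)
  have hv3 : v ⊆ Icc 1 3 := hI.1.1 v (mem_of_mem_gens hv)
  have hv_card : v.card ≤ 3 := by simpa using card_le_card hv3
  by_contra! hlt
  obtain hu0 | hu1 | hu2 : u.card = 0 ∨ u.card = 1 ∨ 2 ≤ u.card := by omega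
  · rw [card_eq_zero.mp hu0, mmax_empty] at hlt
    exact Nat.not_lt_zero _ hlt
  · obtain ⟨a, rfl⟩ := card_eq_one.mp hu1
    rw [mmax_singleton, hu1] at hlt
    have ha : a ≤ 3 := (mem_Icc.mp (hu3 (mem_singleton_self a))).2
    have h1 : ({1} : Finset ℕ) ∈ I := by
      simpa using hI.2 {a} hu a (mem_singleton_self a) 1 le_rfl hlt (by rw [mem_singleton]; omega)
    have h1v : 1 ∉ v := fun h => not_subset_of_mem_gens hv h1 (by simpa) (by simpa)
    have hav : a ∉ v := fun h => not_subset_of_mem_gens hv (mem_of_mem_gens hu) huv (by simpa)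
    have hv' : v ⊆ ((Icc 1 3).erase 1).erase a := fun x hx =>
      mem_erase.mpr ⟨fun h => hav (h ▸ hx), mem_erase.mpr ⟨fun h => h1v (h ▸ hx), hv3 hx⟩⟩
    have hcard : (((Icc 1 3).erase 1).erase a).card = 1 := by interval_cases a <;> rfl
    have := card_le_card hv'
    omega
  · have hv_eq : v = Icc 1 3 := eq_of_subset_of_card_le hv3 (by rw [Nat.card_Icc]; omega)
    exact not_subset_of_mem_gens hv (mem_of_mem_gens hu) huv (hv_eq ▸ hu3)

theorem corners_subsingleton_of_three_vars_general (I : Finset (Finset ℕ))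
    (hI : IsSqStronglyStable 3 I) :
    (corners I).Subsingleton :=
  corners_subsingleton_of_mmax_le_card fun _ hu _ hv huv =>
    mmax_le_card_of_three_vars hI hu hv huv

/-- every nonzero proper squarefree strongly stable ideal of
`K[x_1,x_2,x_3]` has at most one corner. -/
theorem corners_subsingleton_of_three_vars (I : Finset (Finset ℕ))
    (hI : IsSqStronglyStable 3 I) (hne : I.Nonempty) (hproper : ∅ ∉ I) :
    (corners I).Subsingleton :=
  corners_subsingleton_of_three_vars_general I hI
end
end

section
/- Let u = x_{i_1}···x_{i_q} be a squarefree monomial of S = K[x_1,…,x_n] of degree q < n−1. If u has a gap of width ≥ 2, or u has at least two gaps, then there exist squarefree monomials v, w of S of degree q+1 with v >_slex w and m(v) = m(w) = n, such that u divides v and u does not divide w. -/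
open Finset

noncomputable section

/-!
A gap of width at least two, or two gaps, give two indices `g ≠ b` below `m(u)` missing from
`u`, with some `a ∈ u` below `b`. Take `v = x_g u` (or `v = x_n u` when `x_n ∤ u`) and
`w = x_b v / x_a`. Then `m(v) = m(w) = n`, `x_a` divides `u` but not `w`, and the
symmetric difference of `v` and `w` is `{a, b}` with `a < b`, so `v >_slex w`.
-/

lemma le_mmax {u : Finset ℕ} {a : ℕ} (ha : a ∈ u) : a ≤ mmax u :=
  Finset.le_sup (f := id) ha

lemma mmax_mem {u : Finset ℕ} (h : u.Nonempty) : mmax u ∈ u := by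
  obtain ⟨b, hb, he⟩ := exists_mem_eq_sup u h id
  rwa [mmax, he]

lemma mmax_le_of_subset_Icc {n : ℕ} {u : Finset ℕ} (hu : u ⊆ Icc 1 n) : mmax u ≤ n :=
  Finset.sup_le fun _ hx => (mem_Icc.mp (hu hx)).2

lemma mmax_eq_of_mem_of_subset_Icc {n : ℕ} {u : Finset ℕ} (hn : n ∈ u) (hu : u ⊆ Icc 1 n) :
    mmax u = n :=
  (mmax_le_of_subset_Icc hu).antisymm (le_mmax hn)

lemma symmDiff_insert_erase {v : Finset ℕ} {a b : ℕ} (ha : a ∈ v) (hb : b ∉ v) (hab : a ≠ b) :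
    symmDiff v (insert b (v.erase a)) = {a, b} := by
  ext x
  simp only [mem_symmDiff, mem_insert, mem_erase, mem_singleton]
  constructor
  · rintro (⟨hxv, hx⟩ | ⟨hx, hxv⟩) <;> grind
  · rintro (rfl | rfl) <;> grind

lemma slexGT_insert_erase {v : Finset ℕ} {a b : ℕ} (ha : a ∈ v) (hb : b ∉ v) (hab : a < b) :
    slexGT v (insert b (v.erase a)) := by
  have haw : a ∉ insert b (v.erase a) := by simp [hab.ne]
  refine ⟨fun h => haw (h ▸ ha), ?_⟩
  have hset : {x : ℕ | x ∈ symmDiff v (insert b (v.erase a))} = {a, b} := by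
    ext x
    simp [symmDiff_insert_erase ha hb hab.ne]
  rwa [hset, csInf_pair, inf_eq_left.mpr hab.le]

lemma mem_and_succ_notMem_of_mem_gapSet {u : Finset ℕ} {a : ℕ} (ha : a ∈ gapSet u) :
    a ∈ u ∧ a + 1 ∉ u ∧ a + 1 < mmax u := by
  obtain ⟨hau, hlt, hsucc⟩ := mem_filter.mp ha
  have hne : a + 1 ≠ mmax u := fun h => hsucc (h ▸ mmax_mem ⟨a, hau⟩)
  exact ⟨hau, hsucc, by omega⟩

lemma add_two_notMem_of_two_le_gapWidth {u : Finset ℕ} {a : ℕ} (ha : a ∈ gapSet u)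
    (hw : 2 ≤ gapWidth u a) : a + 2 ∉ u ∧ a + 2 < mmax u := by
  set S : Set ℕ := {b | b ∈ u ∧ a < b}
  have hS : S.Nonempty :=
    ⟨mmax u, mmax_mem ⟨a, (mem_and_succ_notMem_of_mem_gapSet ha).1⟩, (mem_filter.mp ha).2.1⟩
  obtain ⟨hsu, hsa⟩ : sInf S ∈ S := Nat.sInf_mem hS
  have hw' : 2 ≤ sInf S - a - 1 := hw
  refine ⟨fun h => ?_, ?_⟩
  · have : sInf S ≤ a + 2 := Nat.sInf_le ⟨h, by omega⟩
    omega
  · have := le_mmax hsu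
    omega

lemma exists_notMem_pair_of_gaps {u : Finset ℕ}
    (h : (∃ a ∈ gapSet u, 2 ≤ gapWidth u a) ∨ 2 ≤ (gapSet u).card) :
    ∃ a ∈ u, ∃ g b, g ∉ u ∧ b ∉ u ∧ 0 < g ∧ g ≠ b ∧ a < b ∧ g < mmax u ∧ b < mmax u := by
  rcases h with ⟨a, ha, hw⟩ | h2
  · obtain ⟨hau, ha1, -⟩ := mem_and_succ_notMem_of_mem_gapSet ha
    obtain ⟨ha2, ha2lt⟩ := add_two_notMem_of_two_le_gapWidth ha hw
    exact ⟨a, hau, a + 1, a + 2, ha1, ha2, by omega, by omega, by omega, by omega, ha2lt⟩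
  · have hne : (gapSet u).Nonempty := card_pos.mp (by omega)
    have hlt := min'_lt_max'_of_card _ h2
    obtain ⟨-, hc1, hc1lt⟩ := mem_and_succ_notMem_of_mem_gapSet (min'_mem _ hne)
    obtain ⟨hc2u, hc2, hc2lt⟩ := mem_and_succ_notMem_of_mem_gapSet (max'_mem _ hne)
    exact ⟨_, hc2u, _, _, hc1, hc2, by omega, by omega, by omega, hc1lt, hc2lt⟩

lemma exists_multiple_nonmultiple_of_notMem {n : ℕ} {u : Finset ℕ} {g a b : ℕ}
    (hu : u ⊆ Icc 1 n) (hg : g ∈ Icc 1 n) (hgu : g ∉ u) (ha : a ∈ u) (hb : b ∈ Icc 1 n)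
    (hbu : b ∉ u) (hbg : b ≠ g) (hab : a < b) (hn : n ∈ insert g u) :
    ∃ v w : Finset ℕ, v ⊆ Icc 1 n ∧ w ⊆ Icc 1 n ∧
      v.card = u.card + 1 ∧ w.card = u.card + 1 ∧ slexGT v w ∧
      mmax v = n ∧ mmax w = n ∧ u ⊆ v ∧ ¬ u ⊆ w := by
  have hav : a ∈ insert g u := mem_insert_of_mem ha
  have hbv : b ∉ insert g u := by simp [hbg, hbu]
  have hv : insert g u ⊆ Icc 1 n := insert_subset hg hu
  have hw : insert b ((insert g u).erase a) ⊆ Icc 1 n :=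
    insert_subset hb ((erase_subset _ _).trans hv)
  have hnw : n ∈ insert b ((insert g u).erase a) :=
    mem_insert_of_mem (mem_erase.mpr ⟨by have := (mem_Icc.mp hb).2; omega, hn⟩)
  refine ⟨_, _, hv, hw, card_insert_of_notMem hgu, ?_, slexGT_insert_erase hav hbv hab,
    mmax_eq_of_mem_of_subset_Icc hn hv, mmax_eq_of_mem_of_subset_Icc hnw hw,
    subset_insert g u, fun h => ?_⟩
  · rw [card_insert_of_notMem (fun h => hbv (mem_of_mem_erase h)), card_erase_of_mem hav,
      card_insert_of_notMem hgu, Nat.add_sub_cancel]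
  · simpa [hab.ne] using h ha

theorem exists_multiple_nonmultiple_general (n q : ℕ) (u : Finset ℕ)
    (hu : u ⊆ Finset.Icc 1 n) (hq : u.card = q)
    (h : (∃ a ∈ gapSet u, 2 ≤ gapWidth u a) ∨ 2 ≤ (gapSet u).card) :
    ∃ v w : Finset ℕ, v ⊆ Finset.Icc 1 n ∧ w ⊆ Finset.Icc 1 n ∧
      v.card = q + 1 ∧ w.card = q + 1 ∧ slexGT v w ∧
      mmax v = n ∧ mmax w = n ∧ u ⊆ v ∧ ¬ u ⊆ w := by
  subst hq
  obtain ⟨a, ha, g, b, hgu, hbu, hg0, hgb, hab, hgm, hbm⟩ := exists_notMem_pair_of_gaps h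
  have hmn := mmax_le_of_subset_Icc hu
  have ha1 := (mem_Icc.mp (hu ha)).1
  have hb : b ∈ Icc 1 n := mem_Icc.mpr ⟨by omega, by omega⟩
  by_cases hnu : n ∈ u
  · exact exists_multiple_nonmultiple_of_notMem hu (mem_Icc.mpr ⟨hg0, by omega⟩) hgu ha hb hbu
      hgb.symm hab (mem_insert_of_mem hnu)
  · exact exists_multiple_nonmultiple_of_notMem hu (mem_Icc.mpr ⟨by omega, le_rfl⟩) hnu ha hb
      hbu (by omega) hab (mem_insert_self n u)

/-- if a squarefree monomial `u` of degree `q < n-1` of `K[x_1,…,x_n]`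
has a gap of width at least `2`, or at least two gaps, then there are squarefree
monomials `v >_slex w` of degree `q+1` with `m(v) = m(w) = n` such that `u ∣ v`
and `u ∤ w`. -/
theorem exists_multiple_nonmultiple (n q : ℕ) (u : Finset ℕ)
    (hu : u ⊆ Finset.Icc 1 n) (hq : u.card = q) (hqn : q < n - 1)
    (h : (∃ a ∈ gapSet u, 2 ≤ gapWidth u a) ∨ 2 ≤ (gapSet u).card) :
    ∃ v w : Finset ℕ, v ⊆ Finset.Icc 1 n ∧ w ⊆ Finset.Icc 1 n ∧
      v.card = q + 1 ∧ w.card = q + 1 ∧ slexGT v w ∧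
      mmax v = n ∧ mmax w = n ∧ u ⊆ v ∧ ¬ u ⊆ w :=
  exists_multiple_nonmultiple_general n q u hu hq h
end
end

section
/- Let I be a squarefree strongly stable ideal of S = K[x_1,x_2,x_3,x_4] of initial degree 2 having a corner in degree 2 (i.e. (k,2) ∈ C(I) for some positive integer k). Then I has at most 2 corners, i.e. |C(I)| ≤ 2. -/
open Finset

noncomputable section

/-!
Two corners of the same degree `ℓ` are impossible: the one with the smaller homological
degree `k` would see the nonzero Betti number of the other. So `(k, ℓ) ↦ ℓ` is injective on
`C(I)`, and a corner in degree `ℓ` needs a minimal generator of degree `ℓ`. In four variables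
these degrees lie in `{2, 3}`: the only squarefree monomial of degree `4` is `x₁x₂x₃x₄`, which is
not a minimal generator once `I` contains a monomial of degree `2`.
-/

lemma gensDeg_nonempty_of_betti_ne_zero {I : Finset (Finset ℕ)} {k l : ℕ}
    (h : betti I k l ≠ 0) : (gensDeg I l).Nonempty := by
  rw [Finset.nonempty_iff_ne_empty]
  rintro hempty
  simp [betti, hempty] at h

lemma corners_injOn_snd (I : Finset (Finset ℕ)) : Set.InjOn Prod.snd (corners I) := by
  rintro ⟨k, l⟩ ⟨hne, hext⟩ ⟨k', l'⟩ ⟨hne', hext'⟩ (rfl : l = l')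
  rcases lt_trichotomy k k' with h | rfl | h
  · exact absurd (hext k' l h.le le_rfl (by simp [h.ne'])) hne'
  · rfl
  · exact absurd (hext' k l h.le le_rfl (by simp [h.ne'])) hne

lemma card_lt_of_mem_gens {n : ℕ} {I : Finset (Finset ℕ)} (hsub : ∀ u ∈ I, u ⊆ Icc 1 n)
    {u w : Finset ℕ} (hu : u ∈ gens I) (hw : w ∈ I) (hwn : w.card < n) : u.card < n := by
  obtain ⟨huI, humin⟩ := Finset.mem_filter.1 hu
  by_contra! hun
  have hu_top : u = Icc 1 n :=
    Finset.eq_of_subset_of_card_le (hsub u huI) (by simpa using hun)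
  have hwu : w = u := humin w hw (hu_top ▸ hsub w hw)
  exact hwn.not_ge (hwu ▸ hun)

lemma snd_mem_Ico_of_mem_corners {n d : ℕ} {I : Finset (Finset ℕ)}
    (hsub : ∀ u ∈ I, u ⊆ Icc 1 n) (hindeg : ∀ u ∈ I, d ≤ u.card)
    {w : Finset ℕ} (hw : w ∈ I) (hwn : w.card < n) {p : ℕ × ℕ} (hp : p ∈ corners I) :
    p.2 ∈ Ico d n := by
  obtain ⟨u, hu⟩ := gensDeg_nonempty_of_betti_ne_zero hp.1
  obtain ⟨hgen, hcard⟩ := Finset.mem_filter.1 hu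
  rw [← hcard]
  exact Finset.mem_Ico.2
    ⟨hindeg u (Finset.mem_filter.1 hgen).1, card_lt_of_mem_gens hsub hgen hw hwn⟩

lemma corners_finite_and_ncard_le {n d : ℕ} {I : Finset (Finset ℕ)}
    (hsub : ∀ u ∈ I, u ⊆ Icc 1 n) (hindeg : ∀ u ∈ I, d ≤ u.card)
    {w : Finset ℕ} (hw : w ∈ I) (hwn : w.card < n) :
    (corners I).Finite ∧ (corners I).ncard ≤ n - d := by
  have himage : Prod.snd '' corners I ⊆ (Ico d n : Set ℕ) := by
    rintro _ ⟨p, hp, rfl⟩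
    exact snd_mem_Ico_of_mem_corners hsub hindeg hw hwn hp
  have hinj := corners_injOn_snd I
  refine ⟨((Ico d n).finite_toSet.subset himage).of_finite_image hinj, ?_⟩
  calc (corners I).ncard = (Prod.snd '' corners I).ncard := hinj.ncard_image.symm
    _ ≤ (Ico d n : Set ℕ).ncard := Set.ncard_le_ncard himage (Ico d n).finite_toSet
    _ = n - d := by rw [Set.ncard_coe_finset, Nat.card_Ico]

theorem corners_le_two_of_four_vars_general (I : Finset (Finset ℕ))
    (hI : IsSqStronglyStable 4 I)
    (hindeg : ∀ u ∈ I, 2 ≤ u.card) (hindeg' : ∃ u ∈ I, u.card = 2) :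
    (corners I).Finite ∧ (corners I).ncard ≤ 2 := by
  obtain ⟨w, hw, hw2⟩ := hindeg'
  exact corners_finite_and_ncard_le hI.1.1 hindeg hw (by omega)

/-- a squarefree strongly stable ideal of `K[x_1,…,x_4]` of initial degree
`2` with a corner in degree `2` has at most `2` corners. -/
theorem corners_le_two_of_four_vars (I : Finset (Finset ℕ))
    (hI : IsSqStronglyStable 4 I)
    (hindeg : ∀ u ∈ I, 2 ≤ u.card) (hindeg' : ∃ u ∈ I, u.card = 2)
    (hcor : ∃ k : ℕ, 1 ≤ k ∧ (k, 2) ∈ corners I) :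
    (corners I).Finite ∧ (corners I).ncard ≤ 2 :=
  corners_le_two_of_four_vars_general I hI hindeg hindeg'
end
end

section
/- Let (k_1,ℓ_1) and (k_2,ℓ_2) be pairs of positive integers with k_1 > k_2, 2 ≤ ℓ_1 < ℓ_2 and k_i+ℓ_i ≤ n for i = 1,2, and let u = x_{i_1}···x_{i_{ℓ_1}} ∈ A^s(k_1,ℓ_1). Assume some element of supp(u) is smaller than k_2+ℓ_2; let i_t be the greatest element of supp(u) with i_t < k_2+ℓ_2, set ū = x_{i_1}···x_{i_t}, and let j_1 < j_2 < ··· < j_{ℓ_2−t} be the ℓ_2−t greatest integers in {1,…,k_2+ℓ_2} \ supp(ū). Then the smallest element of BShad(u)_{(k_2,ℓ_2)} with respect to the squarefree lexicographic order is the monomial x_{j_1}···x_{j_{ℓ_2−t}}·ū, and this monomial belongs to A^s(k_2,ℓ_2). -/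
open Finset

noncomputable section

/-!
`B(u)` consists of the squarefree monomials `w` of degree `deg u` that dominate `u` in the Borel
order, `#(w ∩ [1,m]) ≥ #(u ∩ [1,m])` for all `m`; hence `BShad(u)_{(k₂,ℓ₂)}` consists of the
`ℓ₂`-subsets of `[1, k₂+ℓ₂]` containing such a `w`. The candidate `J ∪ ū` contains `ū` together
with `ℓ₁ - t` elements of `J`, a set dominating `u` because `u ∩ [1,m] ⊆ ū` for `m < k₂+ℓ₂`.
If some `z` in `BShad(u)` were slex-smaller, the first difference `m` would lie in `J ∪ ū` but not
in `z`; when `m ∈ ū`, domination at `m` forces an element of `J` below `m`. As `J` occupies the top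
free positions, every position of `[1, k₂+ℓ₂]` missed by `J ∪ ū` then lies below `m`, so
`z ⊆ (J ∪ ū) \ {m}`, which is too small.
-/

def BorelLE (u w : Finset ℕ) : Prop :=
  ∀ m, #(u.filter (· ≤ m)) ≤ #(w.filter (· ≤ m))

namespace BorelLE

theorem refl (u : Finset ℕ) : BorelLE u u := fun _ => le_rfl

theorem trans {u v w : Finset ℕ} (h₁ : BorelLE u v) (h₂ : BorelLE v w) : BorelLE u w :=
  fun m => (h₁ m).trans (h₂ m)

theorem mono {u w z : Finset ℕ} (h : BorelLE u w) (hwz : w ⊆ z) : BorelLE u z :=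
  fun m => (h m).trans (card_le_card (filter_subset_filter _ hwz))

end BorelLE

theorem card_insert_erase_of_mem {v : Finset ℕ} {i j : ℕ} (hi : i ∈ v) (hj : j ∉ v) :
    #(insert j (v.erase i)) = #v := by
  rw [card_insert_of_notMem fun h => hj (mem_of_mem_erase h), card_erase_add_one hi]

-- Stated additively, since `#s - 1` truncates when the filter misses `i`.
theorem card_filter_le_insert_erase {v : Finset ℕ} {i j : ℕ} (hi : i ∈ v) (hj : j ∉ v)
    (m : ℕ) :
    #((insert j (v.erase i)).filter (· ≤ m)) + (if i ≤ m then 1 else 0) =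
      #(v.filter (· ≤ m)) + (if j ≤ m then 1 else 0) := by
  rw [filter_insert, filter_erase]
  have hj' : j ∉ (v.filter (· ≤ m)).erase i := fun h => hj (mem_filter.1 (mem_of_mem_erase h)).1
  by_cases him : i ≤ m
  · have hi' : i ∈ v.filter (· ≤ m) := mem_filter.2 ⟨hi, him⟩
    have := card_erase_add_one hi'
    split_ifs <;> (try rw [card_insert_of_notMem hj']) <;> omega
  · have hi' : i ∉ v.filter (· ≤ m) := fun h => him (mem_filter.1 h).2
    rw [erase_eq_of_notMem hi'] at hj' ⊢
    split_ifs <;> simp only [card_insert_of_notMem hj']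

theorem borelLE_insert_erase {v : Finset ℕ} {i j : ℕ} (hi : i ∈ v) (hj : j ∉ v) (hji : j < i) :
    BorelLE v (insert j (v.erase i)) := fun m => by
  have := card_filter_le_insert_erase hi hj m
  split_ifs at this <;> omega

theorem BorelLE.exists_step {v w : Finset ℕ} (h : BorelLE v w) (hcard : #v = #w) (hne : v ≠ w) :
    ∃ i ∈ v \ w, ∃ j ∈ w \ v, j < i ∧ BorelLE (insert j (v.erase i)) w := by
  have hvw : (v \ w).Nonempty :=
    sdiff_nonempty.2 fun hsub => hne (eq_of_subset_of_card_le hsub hcard.ge)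
  set i := (v \ w).min' hvw
  obtain ⟨hiv, hiw⟩ : i ∈ v ∧ i ∉ w := mem_sdiff.1 ((v \ w).min'_mem hvw)
  have hbelow : ∀ x ∈ v, x < i → x ∈ w := fun x hx hxi => by
    by_contra hxw
    exact ((v \ w).min'_le x (mem_sdiff.2 ⟨hx, hxw⟩)).not_gt hxi
  -- otherwise `w` would have fewer elements than `v` in `[0, i]`
  obtain ⟨j, hj, hji⟩ : ∃ j ∈ w \ v, j < i := by
    by_contra! hcon
    have hsub : w.filter (· ≤ i) ⊆ (v.filter (· ≤ i)).erase i := fun x hx => by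
      obtain ⟨hxw, hxi⟩ := mem_filter.1 hx
      refine mem_erase.2 ⟨fun hxi' => hiw (hxi' ▸ hxw), mem_filter.2 ⟨?_, hxi⟩⟩
      by_contra hxv
      exact (hcon x (mem_sdiff.2 ⟨hxw, hxv⟩)).not_gt (lt_of_le_of_ne hxi fun h => hiw (h ▸ hxw))
    have hi' : i ∈ v.filter (· ≤ i) := mem_filter.2 ⟨hiv, le_rfl⟩
    have := card_le_card hsub
    have := card_erase_add_one hi'
    have := h i
    omega
  obtain ⟨hjw, hjv⟩ := mem_sdiff.1 hj
  refine ⟨i, mem_sdiff.2 ⟨hiv, hiw⟩, j, hj, hji, fun m => ?_⟩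
  rcases lt_or_ge m i with hmi | him
  · refine card_le_card fun x hx => ?_
    obtain ⟨hx, hxm⟩ := mem_filter.1 hx
    refine mem_filter.2 ⟨?_, hxm⟩
    rcases mem_insert.1 hx with rfl | hx
    · exact hjw
    · exact hbelow x (mem_of_mem_erase hx) (by omega)
  · have := card_filter_le_insert_erase hiv hjv m
    rw [if_pos him, if_pos (hji.le.trans him)] at this
    have := h m
    omega

theorem bmem_of_borelLE {u v w : Finset ℕ} (hv : BMem {u} v) (h : BorelLE v w) (hcard : #v = #w)
    (hw : 0 ∉ w) : BMem {u} w := by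
  induction hd : #(v \ w) generalizing v with
  | zero =>
    rw [card_eq_zero, sdiff_eq_empty_iff_subset] at hd
    exact eq_of_subset_of_card_le hd hcard.ge ▸ hv
  | succ d ih =>
    obtain ⟨i, hi, j, hj, hji, h'⟩ := h.exists_step hcard (by rintro rfl; simp at hd)
    obtain ⟨hiv, hiw⟩ := mem_sdiff.1 hi
    obtain ⟨hjw, hjv⟩ := mem_sdiff.1 hj
    have hj1 : 1 ≤ j := Nat.one_le_iff_ne_zero.2 fun h0 => hw (h0 ▸ hjw)
    refine ih (BMem.step v hv i hiv j hj1 hji hjv) h'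
      (by rw [card_insert_erase_of_mem hiv hjv, hcard]) ?_
    have : insert j (v.erase i) \ w = (v \ w).erase i := by
      rw [insert_sdiff_of_mem _ hjw, erase_sdiff_comm]
    rw [this, card_erase_of_mem hi, hd, Nat.add_sub_cancel]

theorem bmem_singleton_iff {u w : Finset ℕ} (hu : 0 ∉ u) :
    BMem {u} w ↔ 0 ∉ w ∧ #w = #u ∧ BorelLE u w := by
  refine ⟨fun h => ?_, fun ⟨hw, hcard, hle⟩ => bmem_of_borelLE (.base u (mem_singleton_self u))
    hle hcard.symm hw⟩
  induction h with
  | base v hv => rw [mem_singleton.1 hv]; exact ⟨hu, rfl, .refl u⟩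
  | step v _ i hi j hj hji hjv ih =>
    obtain ⟨h0, hcard, hle⟩ := ih
    refine ⟨?_, by rw [card_insert_erase_of_mem hi hjv, hcard],
      hle.trans (borelLE_insert_erase hi hjv hji)⟩
    rw [mem_insert, not_or]
    exact ⟨by omega, fun h => h0 (mem_of_mem_erase h)⟩

theorem borelLE_of_filter_lt_subset {u w : Finset ℕ} {K : ℕ} (hcard : #u ≤ #w)
    (hwK : ∀ x ∈ w, x ≤ K) (hsub : u.filter (· < K) ⊆ w) : BorelLE u w := fun m => by
  rcases lt_or_ge m K with hmK | hKm
  · refine card_le_card fun x hx => ?_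
    obtain ⟨hxu, hxm⟩ := mem_filter.1 hx
    exact mem_filter.2 ⟨hsub (mem_filter.2 ⟨hxu, by omega⟩), hxm⟩
  · rw [filter_true_of_mem fun x hx => (hwK x hx).trans hKm]
    exact (card_filter_le u _).trans hcard

theorem exists_mem_lt_of_borelLE {u z J : Finset ℕ} {m : ℕ} (h : BorelLE u z) (hmu : m ∈ u)
    (hmz : m ∉ z) (hbelow : ∀ x ∈ z, x < m → x ∈ J ∪ u) : ∃ j ∈ J, j < m := by
  by_contra! hJ
  have hsub : z.filter (· ≤ m) ⊆ (u.filter (· ≤ m)).erase m := fun x hx => by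
    obtain ⟨hxz, hxm⟩ := mem_filter.1 hx
    have hxm' : x < m := lt_of_le_of_ne hxm fun h => hmz (h ▸ hxz)
    have hxu : x ∈ u :=
      (mem_union.1 (hbelow x hxz hxm')).resolve_left fun hxJ => (hJ x hxJ).not_gt hxm'
    exact mem_erase.2 ⟨hxm'.ne, mem_filter.2 ⟨hxu, hxm⟩⟩
  have hm : m ∈ u.filter (· ≤ m) := mem_filter.2 ⟨hmu, le_rfl⟩
  have := card_le_card hsub
  have := card_erase_add_one hm
  have := h m
  omega

theorem mem_shadS_iterate_iff {n d : ℕ} {T : Set (Finset ℕ)} {z : Finset ℕ} :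
    z ∈ (shadS n)^[d] T ↔ ∃ w ∈ T, w ⊆ z ∧ #z = #w + d ∧ z \ w ⊆ Icc 1 n := by
  induction d generalizing z with
  | zero =>
    refine ⟨fun hz => ⟨z, hz, subset_rfl, rfl, by simp⟩, ?_⟩
    rintro ⟨w, hw, hwz, hcard, -⟩
    rwa [← eq_of_subset_of_card_le hwz hcard.le]
  | succ d ih =>
    rw [Function.iterate_succ_apply']
    constructor
    · rintro ⟨z, hz, i, hi, hiz, rfl⟩
      obtain ⟨w, hw, hwz, hcard, hsub⟩ := ih.1 hz
      refine ⟨w, hw, hwz.trans (subset_insert i z),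
        by rw [card_insert_of_notMem hiz, hcard, add_assoc], ?_⟩
      intro x hx
      obtain ⟨hx, hxw⟩ := mem_sdiff.1 hx
      rcases mem_insert.1 hx with rfl | hx
      · exact hi
      · exact hsub (mem_sdiff.2 ⟨hx, hxw⟩)
    · rintro ⟨w, hw, hwz, hcard, hsub⟩
      obtain ⟨x, hx⟩ : (z \ w).Nonempty := by
        rw [← card_pos, card_sdiff_of_subset hwz]
        omega
      obtain ⟨hxz, hxw⟩ := mem_sdiff.1 hx
      refine ⟨z.erase x, ih.2 ⟨w, hw, ?_, ?_, ?_⟩, x, hsub hx, notMem_erase x z,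
        (insert_erase hxz).symm⟩
      · exact fun y hy => mem_erase.2 ⟨fun hyx => hxw (hyx ▸ hy), hwz hy⟩
      · rw [card_erase_of_mem hxz]
        omega
      · exact (sdiff_subset_sdiff (erase_subset x z) subset_rfl).trans hsub

theorem le_mmax_s14 {v : Finset ℕ} {x : ℕ} (hx : x ∈ v) : x ≤ mmax v :=
  le_sup (f := id) hx

theorem mmax_eq_of_mem {v : Finset ℕ} {K : ℕ} (hK : K ∈ v) (h : ∀ x ∈ v, x ≤ K) : mmax v = K :=
  le_antisymm (Finset.sup_le h) (le_mmax_s14 hK)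

theorem mem_Asf {n k l : ℕ} {v : Finset ℕ} :
    v ∈ Asf n k l ↔ v ⊆ Icc 1 n ∧ #v = l ∧ mmax v = k + l := by
  rw [Asf, mem_filter, mem_powerset]

theorem mem_bshad_singleton_iff {n l1 k2 l2 : ℕ} {u z : Finset ℕ} (hu : 0 ∉ u)
    (hn : k2 + l2 ≤ n) :
    z ∈ bshad n l1 k2 l2 {u} ↔
      z ⊆ Icc 1 (k2 + l2) ∧ #z = #u + (l2 - l1) ∧ ∃ w ⊆ z, BMem {u} w := by
  constructor
  · rintro ⟨hz, hzK⟩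
    obtain ⟨w, hw, hwz, hcard, hzw⟩ := mem_shadS_iterate_iff.1 hz
    obtain ⟨hw0, hwcard, -⟩ := (bmem_singleton_iff hu).1 hw
    refine ⟨fun x hx => mem_Icc.2 ⟨?_, (le_mmax_s14 hx).trans hzK⟩, by rw [hcard, hwcard],
      w, hwz, hw⟩
    by_cases hxw : x ∈ w
    · exact Nat.one_le_iff_ne_zero.2 fun h => hw0 (h ▸ hxw)
    · exact (mem_Icc.1 (hzw (mem_sdiff.2 ⟨hx, hxw⟩))).1
  · rintro ⟨hzK, hcard, w, hwz, hw⟩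
    obtain ⟨-, hwcard, -⟩ := (bmem_singleton_iff hu).1 hw
    refine ⟨mem_shadS_iterate_iff.2 ⟨w, hw, hwz, by rw [hcard, hwcard], ?_⟩,
      Finset.sup_le fun x hx => (mem_Icc.1 (hzK hx)).2⟩
    exact sdiff_subset.trans (hzK.trans (Icc_subset_Icc_right hn))

theorem exists_mem_notMem_of_not_slexGE {z v : Finset ℕ} (h : ¬slexGE z v) :
    ∃ m ∈ v, m ∉ z ∧ ∀ x ∈ z, x < m → x ∈ v := by
  simp only [slexGE, slexGT, not_or, not_and] at h
  obtain ⟨hne, hm⟩ := h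
  have hS : (symmDiff z v).Nonempty :=
    nonempty_iff_ne_empty.2 fun he => hne (symmDiff_eq_bot.1 he)
  have hmS : sInf {a | a ∈ symmDiff z v} ∈ symmDiff z v := Nat.sInf_mem hS
  have hmz := hm hne
  refine ⟨_, ((mem_symmDiff.1 hmS).resolve_left fun h => hmz h.1).1, hmz, fun x hx hxm => ?_⟩
  by_contra hxv
  exact (Nat.sInf_le (mem_symmDiff.2 (Or.inl ⟨hx, hxv⟩))).not_gt hxm

theorem subset_erase_of_agree_below {S z v : Finset ℕ} {m : ℕ} (hzS : z ⊆ S)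
    (hgap : ∀ b ∈ S \ v, b < m) (hmz : m ∉ z) (hbelow : ∀ x ∈ z, x < m → x ∈ v) :
    z ⊆ v.erase m := fun x hx => by
  refine mem_erase.2 ⟨fun h => hmz (h ▸ hx), ?_⟩
  rcases lt_or_ge x m with hxm | hmx
  · exact hbelow x hx hxm
  · by_contra hxv
    exact (hgap x (mem_sdiff.2 ⟨hzS hx, hxv⟩)).not_ge hmx

section TopCompletion

variable {K : ℕ} {u J : Finset ℕ}

theorem union_filter_lt_subset_Icc (hu : 0 ∉ u) (hJ : J ⊆ Icc 1 K \ u.filter (· < K)) :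
    J ∪ u.filter (· < K) ⊆ Icc 1 K := by
  refine union_subset (hJ.trans sdiff_subset) fun x hx => ?_
  obtain ⟨hxu, hxK⟩ := mem_filter.1 hx
  exact mem_Icc.2 ⟨Nat.one_le_iff_ne_zero.2 fun h => hu (h ▸ hxu), hxK.le⟩

theorem top_mem_of_forall_notMem_lt (hJ : J ⊆ Icc 1 K \ u.filter (· < K))
    (hJtop : ∀ a ∈ J, ∀ b ∈ Icc 1 K \ u.filter (· < K), b ∉ J → b < a) (hne : J.Nonempty) :
    K ∈ J := by
  obtain ⟨a, ha⟩ := hne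
  have haK := mem_Icc.1 (mem_sdiff.1 (hJ ha)).1
  by_contra hK
  have hK' : K ∈ Icc 1 K \ u.filter (· < K) :=
    mem_sdiff.2 ⟨mem_Icc.2 ⟨haK.1.trans haK.2, le_rfl⟩, fun h => lt_irrefl K (mem_filter.1 h).2⟩
  exact (hJtop a ha K hK' hK).not_ge haK.2

theorem exists_bmem_subset_union (hu : 0 ∉ u) (hJ : J ⊆ Icc 1 K \ u.filter (· < K))
    (hcard : #u ≤ #J + #(u.filter (· < K))) :
    ∃ w ⊆ J ∪ u.filter (· < K), BMem {u} w := by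
  obtain ⟨X, hXJ, hXcard⟩ :=
    exists_subset_card_eq (show #u - #(u.filter (· < K)) ≤ #J by omega)
  have hdisj : Disjoint (u.filter (· < K)) X :=
    (disjoint_of_subset_left hJ sdiff_disjoint).symm.mono_right hXJ
  have hsub : u.filter (· < K) ∪ X ⊆ J ∪ u.filter (· < K) :=
    union_subset subset_union_right (hXJ.trans subset_union_left)
  have hsubK := hsub.trans (union_filter_lt_subset_Icc hu hJ)
  have hwcard : #(u.filter (· < K) ∪ X) = #u := by
    rw [card_union_of_disjoint hdisj, hXcard]
    have := card_filter_le u (· < K)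
    omega
  refine ⟨_, hsub, (bmem_singleton_iff hu).2 ⟨fun h0 => by simpa using hsubK h0, hwcard, ?_⟩⟩
  exact borelLE_of_filter_lt_subset hwcard.ge (fun x hx => (mem_Icc.1 (hsubK hx)).2)
    subset_union_left

theorem slexGE_union_filter_lt
    (hJtop : ∀ a ∈ J, ∀ b ∈ Icc 1 K \ u.filter (· < K), b ∉ J → b < a) {z : Finset ℕ}
    (hz : z ⊆ Icc 1 K) (hcard : #z = #(J ∪ u.filter (· < K))) (hle : BorelLE u z) :
    slexGE z (J ∪ u.filter (· < K)) := by
  by_contra hlt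
  obtain ⟨m, hmv, hmz, hbelow⟩ := exists_mem_notMem_of_not_slexGE hlt
  obtain ⟨j, hj, hjm⟩ : ∃ j ∈ J, j ≤ m := by
    rcases mem_union.1 hmv with hmJ | hmu
    · exact ⟨m, hmJ, le_rfl⟩
    · obtain ⟨j, hj, hjm⟩ := exists_mem_lt_of_borelLE hle (mem_filter.1 hmu).1 hmz
        fun x hx hxm => union_subset_union subset_rfl (filter_subset _ u) (hbelow x hx hxm)
      exact ⟨j, hj, hjm.le⟩
  have hgap : ∀ b ∈ Icc 1 K \ (J ∪ u.filter (· < K)), b < m := fun b hb => by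
    rw [mem_sdiff, mem_union, not_or] at hb
    exact (hJtop j hj b (mem_sdiff.2 ⟨hb.1, hb.2.2⟩) hb.2.1).trans_le hjm
  have := card_le_card (subset_erase_of_agree_below hz hgap hmz hbelow)
  rw [card_erase_of_mem hmv] at this
  have := card_pos.2 ⟨m, hmv⟩
  omega

end TopCompletion

theorem min_bshad_eq_general (n k1 l1 k2 l2 : ℕ) (hl : l1 < l2) (h2 : k2 + l2 ≤ n)
    (u : Finset ℕ) (hu : u ∈ Asf n k1 l1)
    (ubar : Finset ℕ) (hub : ubar = u.filter fun a => a < k2 + l2)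
    (J : Finset ℕ)
    (hJsub : J ⊆ Finset.Icc 1 (k2 + l2) \ ubar)
    (hJcard : J.card = l2 - ubar.card)
    (hJtop : ∀ a ∈ J, ∀ b ∈ Finset.Icc 1 (k2 + l2) \ ubar, b ∉ J → b < a) :
    (J ∪ ubar ∈ bshad n l1 k2 l2 {u} ∧
        ∀ z ∈ bshad n l1 k2 l2 {u}, slexGE z (J ∪ ubar)) ∧
      J ∪ ubar ∈ Asf n k2 l2 := by
  subst hub
  obtain ⟨huIcc, hucard, -⟩ := mem_Asf.1 hu
  have hu0 : 0 ∉ u := fun h => by simpa using huIcc h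
  have hsub := union_filter_lt_subset_Icc hu0 hJsub
  have hbar : #(u.filter (· < k2 + l2)) ≤ l1 := hucard ▸ card_filter_le u _
  have hcard : #(J ∪ u.filter (· < k2 + l2)) = l2 := by
    rw [card_union_of_disjoint (disjoint_of_subset_left hJsub sdiff_disjoint), hJcard]
    omega
  have hK : k2 + l2 ∈ J := top_mem_of_forall_notMem_lt hJsub hJtop (card_pos.1 (by omega))
  have hmmax : mmax (J ∪ u.filter (· < k2 + l2)) = k2 + l2 :=
    mmax_eq_of_mem (mem_union_left _ hK) fun x hx => (mem_Icc.1 (hsub hx)).2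
  obtain ⟨w, hwv, hw⟩ := exists_bmem_subset_union hu0 hJsub (by omega)
  refine ⟨⟨(mem_bshad_singleton_iff hu0 h2).2 ⟨hsub, by omega, w, hwv, hw⟩, fun z hz => ?_⟩,
    mem_Asf.2 ⟨hsub.trans (Icc_subset_Icc_right h2), hcard, hmmax⟩⟩
  obtain ⟨hzK, hzcard, w, hwz, hw⟩ := (mem_bshad_singleton_iff hu0 h2).1 hz
  exact slexGE_union_filter_lt hJtop hzK (by omega)
    (((bmem_singleton_iff hu0).1 hw).2.2.mono hwz)

/-- with `(k₁,ℓ₁)`, `(k₂,ℓ₂)` as below, `u ∈ A^s(k₁,ℓ₁)`,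
`ū = x_{i_1}⋯x_{i_t}` the part of `u` below `k₂+ℓ₂` (assumed nonempty), and
`J = {j_1 < ⋯ < j_{ℓ₂-t}}` the `ℓ₂ - t` greatest integers of `{1,…,k₂+ℓ₂} \ supp(ū)`,
the monomial `x_{j_1}⋯x_{j_{ℓ₂-t}}·ū` is the slex-smallest element of
`BShad(u)_{(k₂,ℓ₂)}` and belongs to `A^s(k₂,ℓ₂)`. -/
theorem min_bshad_eq (n k1 l1 k2 l2 : ℕ) (hk2 : 1 ≤ k2) (hk : k2 < k1)
    (hl1 : 2 ≤ l1) (hl : l1 < l2) (h1 : k1 + l1 ≤ n) (h2 : k2 + l2 ≤ n)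
    (u : Finset ℕ) (hu : u ∈ Asf n k1 l1)
    (ubar : Finset ℕ) (hub : ubar = u.filter fun a => a < k2 + l2)
    (hne : ubar.Nonempty)
    (J : Finset ℕ)
    (hJsub : J ⊆ Finset.Icc 1 (k2 + l2) \ ubar)
    (hJcard : J.card = l2 - ubar.card)
    (hJtop : ∀ a ∈ J, ∀ b ∈ Finset.Icc 1 (k2 + l2) \ ubar, b ∉ J → b < a) :
    (J ∪ ubar ∈ bshad n l1 k2 l2 {u} ∧
        ∀ z ∈ bshad n l1 k2 l2 {u}, slexGE z (J ∪ ubar)) ∧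
      J ∪ ubar ∈ Asf n k2 l2 :=
  min_bshad_eq_general n k1 l1 k2 l2 hl h2 u hu ubar hub J hJsub hJcard hJtop
end
end

section
/- Let (k_1,ℓ_1) and (k_2,ℓ_2) be pairs of positive integers with k_1 > k_2, ℓ_1 < ℓ_2 and k_i+ℓ_i ≤ n for i = 1,2, and let u_1,…,u_r be squarefree monomials of S = K[x_1,…,x_n] of degree ℓ_1 with m(u_j) = k_1+ℓ_1 for all j. Then BShad(u_1,…,u_r)_{(k_2,ℓ_2)} is a squarefree strongly stable set of squarefree monomials of degree ℓ_2. -/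
open Finset

noncomputable section

/-!
`B(u_1,…,u_r)` is strongly stable by construction, and the shadow of a strongly stable set
is again strongly stable. A move `u ↦ x_j u / x_i` with `j < i` never increases `m(u)`, so
cutting the iterated shadow down to `m(v) ≤ k₂ + ℓ₂` keeps it strongly stable. Each shadow
raises the degree by one, so the degree is `ℓ₁ + (ℓ₂ - ℓ₁) = ℓ₂`.
-/

lemma mmax_insert_erase_le {v : Finset ℕ} {i j : ℕ} (hi : i ∈ v) (hji : j < i) :
    mmax (insert j (v.erase i)) ≤ mmax v := by
  rw [mmax, Finset.sup_insert]
  exact sup_le (hji.le.trans (Finset.le_sup (f := id) hi))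
    (Finset.sup_mono (Finset.erase_subset _ _))

lemma insert_erase_subset_Icc {n i j : ℕ} {u : Finset ℕ} (hu : u ⊆ Finset.Icc 1 n)
    (hi : i ∈ u) (hj1 : 1 ≤ j) (hji : j < i) : insert j (u.erase i) ⊆ Finset.Icc 1 n :=
  Finset.insert_subset (Finset.mem_Icc.mpr ⟨hj1, hji.le.trans (Finset.mem_Icc.mp (hu hi)).2⟩)
    ((Finset.erase_subset _ _).trans hu)

lemma card_insert_erase_of_notMem {u : Finset ℕ} {i j : ℕ} (hi : i ∈ u) (hju : j ∉ u) :
    (insert j (u.erase i)).card = u.card := by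
  rw [Finset.card_insert_of_notMem (fun h => hju (Finset.mem_of_mem_erase h)),
    Finset.card_erase_add_one hi]

lemma isSSSetS_setOf_bMem (U : Finset (Finset ℕ)) : IsSSSetS {u | BMem U u} :=
  fun u hu i hi j hj1 hji hju => BMem.step u hu i hi j hj1 hji hju

lemma BMem.subset_Icc_and_card_eq {n c : ℕ} {U : Finset (Finset ℕ)}
    (hU : ∀ u ∈ U, u ⊆ Finset.Icc 1 n ∧ u.card = c) {u : Finset ℕ} (hu : BMem U u) :
    u ⊆ Finset.Icc 1 n ∧ u.card = c := by
  induction hu with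
  | base u hu => exact hU u hu
  | step u _ i hi j hj1 hji hju ih =>
    exact ⟨insert_erase_subset_Icc ih.1 hi hj1 hji,
      (card_insert_erase_of_notMem hi hju).trans ih.2⟩

lemma subset_Icc_and_card_eq_of_mem_iterate_shadS {n c m : ℕ} {T : Set (Finset ℕ)}
    (hT : ∀ u ∈ T, u ⊆ Finset.Icc 1 n ∧ u.card = c) :
    ∀ v ∈ (shadS n)^[m] T, v ⊆ Finset.Icc 1 n ∧ v.card = c + m := by
  induction m with
  | zero => simpa using hT
  | succ m ih =>
    rw [Function.iterate_succ_apply']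
    rintro v ⟨u, hu, i, hin, hiu, rfl⟩
    obtain ⟨hs, hc⟩ := ih u hu
    exact ⟨Finset.insert_subset hin hs, by rw [Finset.card_insert_of_notMem hiu, hc, add_assoc]⟩

namespace IsSSSetS

variable {T : Set (Finset ℕ)}

/-- Moving the new variable `x_{i₀}` of `x_{i₀} u` is the shadow of `x_j u`; moving a variable
of `u` is `x_{i₀}` times the move inside `u`. -/
lemma shadS (hT : IsSSSetS T) (n : ℕ) : IsSSSetS (shadS n T) := by
  rintro v ⟨u, hu, i₀, hi₀n, hi₀u, rfl⟩ i hi j hj1 hji hjv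
  rw [Finset.mem_insert, not_or] at hjv
  obtain ⟨hji₀, hju⟩ := hjv
  by_cases hii₀ : i = i₀
  · subst hii₀
    rw [Finset.erase_insert hi₀u]
    exact ⟨u, hu, j, Finset.mem_Icc.mpr ⟨hj1, hji.le.trans (Finset.mem_Icc.mp hi₀n).2⟩,
      hju, rfl⟩
  · refine ⟨insert j (u.erase i),
      hT u hu i (Finset.mem_of_mem_insert_of_ne hi hii₀) j hj1 hji hju, i₀, hi₀n, ?_, ?_⟩
    · simp only [Finset.mem_insert, Finset.mem_erase, not_or]
      exact ⟨Ne.symm hji₀, fun h => hi₀u h.2⟩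
    · rw [Finset.erase_insert_of_ne (Ne.symm hii₀), Finset.insert_comm]

lemma iterate_shadS (hT : IsSSSetS T) (n m : ℕ) : IsSSSetS ((_root_.shadS n)^[m] T) := by
  induction m with
  | zero => exact hT
  | succ m ih => rw [Function.iterate_succ_apply']; exact ih.shadS n

lemma sep_mmax_le (hT : IsSSSetS T) (c : ℕ) : IsSSSetS {v ∈ T | mmax v ≤ c} :=
  fun v hv i hi j hj1 hji hjv =>
    ⟨hT v hv.1 i hi j hj1 hji hjv, (mmax_insert_erase_le hi hji).trans hv.2⟩

end IsSSSetS

theorem bshad_sq_strongly_stable_general (n k1 l1 k2 l2 : ℕ)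
    (hl : l1 < l2)
    (U : Finset (Finset ℕ))
    (hU : ∀ u ∈ U, u ⊆ Finset.Icc 1 n ∧ u.card = l1 ∧ mmax u = k1 + l1) :
    (∀ v ∈ bshad n l1 k2 l2 U, v ⊆ Finset.Icc 1 n ∧ v.card = l2) ∧
      IsSSSetS (bshad n l1 k2 l2 U) := by
  have hB : ∀ u ∈ {u | BMem U u}, u ⊆ Finset.Icc 1 n ∧ u.card = l1 :=
    fun u hu => hu.subset_Icc_and_card_eq fun u hu => ⟨(hU u hu).1, (hU u hu).2.1⟩
  refine ⟨fun v hv => ?_, ((isSSSetS_setOf_bMem U).iterate_shadS n _).sep_mmax_le _⟩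
  obtain ⟨hs, hc⟩ := subset_Icc_and_card_eq_of_mem_iterate_shadS hB v hv.1
  exact ⟨hs, by rw [hc, Nat.add_sub_cancel' hl.le]⟩

/-- with `(k₁,ℓ₁)`, `(k₂,ℓ₂)` as below and `u_1,…,u_r` squarefree
monomials of degree `ℓ₁` with `m(u_j) = k₁+ℓ₁`, the set `BShad(u_1,…,u_r)_{(k₂,ℓ₂)}`
is a squarefree strongly stable set of degree-`ℓ₂` squarefree monomials. -/
theorem bshad_sq_strongly_stable (n k1 l1 k2 l2 : ℕ) (hk2 : 1 ≤ k2) (hk : k2 < k1)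
    (hl1 : 1 ≤ l1) (hl : l1 < l2) (h1 : k1 + l1 ≤ n) (h2 : k2 + l2 ≤ n)
    (U : Finset (Finset ℕ))
    (hU : ∀ u ∈ U, u ⊆ Finset.Icc 1 n ∧ u.card = l1 ∧ mmax u = k1 + l1) :
    (∀ v ∈ bshad n l1 k2 l2 U, v ⊆ Finset.Icc 1 n ∧ v.card = l2) ∧
      IsSSSetS (bshad n l1 k2 l2 U) :=
  bshad_sq_strongly_stable_general n k1 l1 k2 l2 hl U hU
end
end
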